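/- In the equilateral reference triangle with vertices P1=(0,0), P2=(1,0), P3=(1/2,√3/2), with P4(s)=P1+s(P2−P1), P5(t)=P2+t(P3−P2), P6(r)=P1+r(P3−P1): for every r,s∈(0,1) and the parameter t chosen by the rule t=1/2 if r,s≤1/2 or exactly one of r,s exceeds 1/2, and t=1−s if both r,s>1/2, every interior angle of each of the four subtriangles (P1,P4,P6), (P4,P2,P5), (P6,P5,P3), (P4,P5,P6) is at most 150°. -/

import Mathlib

/-!
Each corner subtriangle keeps the angle `π / 3` of the reference triangle at its corner, so by the
angle sum its other two angles add up to `2π / 3`. The law of cosines at the corners gives the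
squared sides of the inner triangle as polynomials in `r`, `s`, `t`, and at each vertex of the inner
triangle it turns `cos ≥ -√3 / 2` into a polynomial inequality, checked on each branch of the rule
for `t`.
-/

open EuclideanGeometry Real Set

/-- All three interior angles of the triangle `A B C` are at most `θ`. -/
def AnglesLe (A B C : EuclideanSpace ℝ (Fin 2)) (θ : ℝ) : Prop :=
  ∠ B A C ≤ θ ∧ ∠ A B C ≤ θ ∧ ∠ A C B ≤ θ

open InnerProductGeometry
open scoped RealInnerProductSpace

namespace InnerProductGeometry

variable {V : Type*} [NormedAddCommGroup V] [InnerProductSpace ℝ V]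

theorem angle_le_five_pi_div_six_of_sq_inner_le {u v : V}
    (h : ⟪u, v⟫ < 0 → 4 * ⟪u, v⟫ ^ 2 ≤ 3 * (‖u‖ ^ 2 * ‖v‖ ^ 2)) :
    angle u v ≤ 5 * π / 6 := by
  have hcos : cos (5 * π / 6) = -(√3 / 2) := by
    rw [show 5 * π / 6 = π - π / 6 by ring, cos_pi_sub, cos_pi_div_six]
  rw [angle, ← arccos_cos (x := 5 * π / 6) (by positivity) (by linarith [pi_pos])]
  refine arccos_le_arccos ?_
  rw [hcos]
  rcases le_or_gt 0 ⟪u, v⟫ with hnonneg | hneg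
  · exact (neg_nonpos.2 (by positivity)).trans (div_nonneg hnonneg (by positivity))
  · have hu : u ≠ 0 := by rintro rfl; simp at hneg
    have hv : v ≠ 0 := by rintro rfl; simp at hneg
    rw [le_div_iff₀ (by positivity)]
    have hsq : ⟪u, v⟫ ^ 2 ≤ (√3 / 2 * (‖u‖ * ‖v‖)) ^ 2 := by
      have := h hneg
      rw [mul_pow, div_pow, sq_sqrt zero_le_three]
      linarith
    linarith [(abs_le_of_sq_le_sq' hsq (by positivity)).1]

end InnerProductGeometry

namespace EuclideanGeometry

variable {V P : Type*} [NormedAddCommGroup V] [InnerProductSpace ℝ V] [MetricSpace P]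
  [NormedAddTorsor V P]

theorem angle_le_five_pi_div_six_of_dist_sq {A B C : P}
    (h : dist A B ^ 2 + dist C B ^ 2 < dist A C ^ 2 →
      (dist A C ^ 2 - dist A B ^ 2 - dist C B ^ 2) ^ 2 ≤ 3 * dist A B ^ 2 * dist C B ^ 2) :
    ∠ A B C ≤ 5 * π / 6 := by
  apply angle_le_five_pi_div_six_of_sq_inner_le
  have hinner : 2 * ⟪A -ᵥ B, C -ᵥ B⟫ = dist A B ^ 2 + dist C B ^ 2 - dist A C ^ 2 := by
    rw [real_inner_eq_norm_mul_self_add_norm_mul_self_sub_norm_sub_mul_self_div_two,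
      vsub_sub_vsub_cancel_right, dist_eq_norm_vsub V, dist_eq_norm_vsub V, dist_eq_norm_vsub V]
    ring
  rw [← dist_eq_norm_vsub V, ← dist_eq_norm_vsub V]
  intro hneg
  nlinarith [h (by linarith)]

theorem angle_eq_pi_div_three_of_dist_eq {A B C : P} {d : ℝ} (hd : d ≠ 0) (hAB : dist A B = d)
    (hAC : dist A C = d) (hBC : dist B C = d) : ∠ B A C = π / 3 := by
  have hcos : cos (∠ B A C) = cos (π / 3) := by
    have := law_cos B A C
    rw [dist_comm B A, dist_comm C A, hAB, hAC, hBC] at this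
    have h2 : d * d * (2 * cos (∠ B A C) - 1) = 0 := by linarith
    have := (mul_eq_zero.1 h2).resolve_left (mul_ne_zero hd hd)
    rw [cos_pi_div_three]
    linarith
  exact injOn_cos ⟨angle_nonneg B A C, angle_le_pi B A C⟩ ⟨by positivity, by linarith [pi_pos]⟩ hcos

theorem angle_add_angle_eq_two_pi_div_three {A B C : P} (h : ∠ B A C = π / 3) :
    ∠ A B C + ∠ A C B = 2 * π / 3 := by
  have hBA : B ≠ A := by
    rintro rfl
    rw [angle_self_left] at h
    linarith [pi_pos]
  have := angle_add_angle_add_angle_eq_pi C hBA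
  rw [angle_comm B C A, angle_comm C A B, h] at this
  linarith

end EuclideanGeometry

section Corner

variable {E : Type*} [NormedAddCommGroup E] [InnerProductSpace ℝ E]

-- the squared third side of a triangle whose sides `x` and `y` enclose the angle `π / 3`
def cornerSq (x y : ℝ) : ℝ := x ^ 2 - x * y + y ^ 2

theorem angle_add_smul_sub (A B C : E) {x y : ℝ} (hx : 0 < x) (hy : 0 < y) :
    ∠ (A + x • (B - A)) A (A + y • (C - A)) = ∠ B A C := by
  simp only [EuclideanGeometry.angle, vsub_eq_sub, add_sub_cancel_left,
    angle_smul_left_of_pos _ _ hx, angle_smul_right_of_pos _ _ hy]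

theorem angle_and_dist_sq_of_unit_equilateral {A B C X Y : E} {x y : ℝ} (hAB : dist A B = 1)
    (hAC : dist A C = 1) (hBC : dist B C = 1) (hx : 0 < x) (hy : 0 < y)
    (hX : X = A + x • (B - A)) (hY : Y = A + y • (C - A)) :
    ∠ X A Y = π / 3 ∧ dist X Y ^ 2 = cornerSq x y := by
  have hangle : ∠ X A Y = π / 3 := by
    rw [hX, hY, angle_add_smul_sub A B C hx hy]
    exact angle_eq_pi_div_three_of_dist_eq one_ne_zero hAB hAC hBC
  have hAX : dist X A = x := by
    rw [hX, dist_eq_norm, add_sub_cancel_left, norm_smul, ← dist_eq_norm, dist_comm, hAB,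
      Real.norm_of_nonneg hx.le, mul_one]
  have hAY : dist Y A = y := by
    rw [hY, dist_eq_norm, add_sub_cancel_left, norm_smul, ← dist_eq_norm, dist_comm, hAC,
      Real.norm_of_nonneg hy.le, mul_one]
  refine ⟨hangle, ?_⟩
  have := law_cos X A Y
  rw [hAX, hAY, hangle, cos_pi_div_three] at this
  rw [cornerSq, sq, this]
  ring

end Corner

theorem AnglesLe.rotate {A B C : EuclideanSpace ℝ (Fin 2)} {θ : ℝ} (h : AnglesLe A B C θ) :
    AnglesLe B C A θ := by
  obtain ⟨hA, hB, hC⟩ := h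
  exact ⟨angle_comm A B C ▸ hB, angle_comm A C B ▸ hC, hA⟩

theorem anglesLe_of_angle_eq_pi_div_three {A B C : EuclideanSpace ℝ (Fin 2)}
    (h : ∠ B A C = π / 3) : AnglesLe A B C (5 * π / 6) := by
  have hsum := angle_add_angle_eq_two_pi_div_three h
  have hB := angle_nonneg A B C
  have hC := angle_nonneg A C B
  refine ⟨?_, ?_, ?_⟩ <;> linarith [pi_pos]

-- By the law of cosines, a triangle with squared sides `a = AB², b = BC², c = AC²` has all its
-- angles at most `5π/6` iff these three conditions hold.
def SqSidesAnglesLe (a b c : ℝ) : Prop :=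
  (a + c < b → (b - a - c) ^ 2 ≤ 3 * a * c) ∧ (a + b < c → (c - a - b) ^ 2 ≤ 3 * a * b) ∧
    (c + b < a → (a - c - b) ^ 2 ≤ 3 * c * b)

theorem anglesLe_of_sqSidesAnglesLe {A B C : EuclideanSpace ℝ (Fin 2)}
    (h : SqSidesAnglesLe (dist A B ^ 2) (dist B C ^ 2) (dist A C ^ 2)) :
    AnglesLe A B C (5 * π / 6) := by
  obtain ⟨hA, hB, hC⟩ := h
  refine ⟨angle_le_five_pi_div_six_of_dist_sq ?_, angle_le_five_pi_div_six_of_dist_sq ?_,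
    angle_le_five_pi_div_six_of_dist_sq hC⟩
  · rwa [dist_comm B A, dist_comm C A]
  · rwa [dist_comm C B]

theorem dist_vec2 (a b c d : ℝ) : dist !₂[a, b] !₂[c, d] = √((a - c) ^ 2 + (b - d) ^ 2) := by
  simp [EuclideanSpace.dist_eq, Fin.sum_univ_two, Real.dist_eq, sq_abs]

theorem sqSidesAnglesLe_of_rule {r s t : ℝ} (hr : r ∈ Ioo (0 : ℝ) 1) (hs : s ∈ Ioo (0 : ℝ) 1)
    (ht : t = if r ≤ 1 / 2 ∨ s ≤ 1 / 2 then 1 / 2 else 1 - s) :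
    SqSidesAnglesLe (cornerSq t (1 - s)) (cornerSq (1 - r) (1 - t)) (cornerSq s r) := by
  obtain ⟨hr0, hr1⟩ := hr
  obtain ⟨hs0, hs1⟩ := hs
  unfold SqSidesAnglesLe cornerSq
  split_ifs at ht with h
  · subst ht
    refine ⟨fun _ ↦ ?_, fun _ ↦ ?_, fun _ ↦ ?_⟩
    · nlinarith [mul_pos hr0 hs0, mul_pos (mul_pos hr0 hs0) hs0,
        mul_pos (mul_pos hs0 hs0) (sub_pos.2 hs1)]
    · rcases h with h | h <;>
        nlinarith [mul_pos hr0 hs0, mul_pos (mul_pos hr0 hs0) hs0, mul_pos (mul_pos hr0 hs0) hr0]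
    · nlinarith [mul_pos hr0 hs0, mul_pos (mul_pos hr0 hs0) hr0,
        mul_pos (mul_pos hr0 hr0) (sub_pos.2 hr1)]
  · subst ht
    rw [not_or, not_le, not_le] at h
    refine ⟨fun _ ↦ ?_, fun _ ↦ ?_, fun _ ↦ ?_⟩
    · nlinarith [mul_pos (sub_pos.2 hr1) (sub_pos.2 hs1)]
    · nlinarith [mul_pos (sub_pos.2 hr1) (sub_pos.2 hs1)]
    · nlinarith [mul_pos (sub_pos.2 hs1) (sub_pos.2 hs1)]

theorem stmt_8
    (P1 P2 P3 : EuclideanSpace ℝ (Fin 2))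
    (hP1 : P1 = !₂[0, 0]) (hP2 : P2 = !₂[1, 0]) (hP3 : P3 = !₂[1/2, Real.sqrt 3 / 2])
    (r s : ℝ) (hr : r ∈ Set.Ioo (0:ℝ) 1) (hs : s ∈ Set.Ioo (0:ℝ) 1)
    (t : ℝ) (ht : t = if r ≤ 1/2 ∨ s ≤ 1/2 then 1/2 else 1 - s)
    (P4 P5 P6 : EuclideanSpace ℝ (Fin 2))
    (hP4 : P4 = P1 + s • (P2 - P1))
    (hP5 : P5 = P2 + t • (P3 - P2))
    (hP6 : P6 = P1 + r • (P3 - P1)) :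
    AnglesLe P1 P4 P6 (5 * π / 6) ∧ AnglesLe P4 P2 P5 (5 * π / 6) ∧
      AnglesLe P6 P5 P3 (5 * π / 6) ∧ AnglesLe P4 P5 P6 (5 * π / 6) := by
  have ht0 : 0 < t := by split_ifs at ht <;> linarith [hs.2]
  have ht1 : t < 1 := by split_ifs at ht <;> linarith [hs.1]
  have h12 : dist P1 P2 = 1 := by rw [hP1, hP2, dist_vec2]; norm_num
  have h13 : dist P1 P3 = 1 := by rw [hP1, hP3, dist_vec2]; norm_num [div_pow]
  have h23 : dist P2 P3 = 1 := by rw [hP2, hP3, dist_vec2]; norm_num [div_pow]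
  obtain ⟨hA1, hd1⟩ := angle_and_dist_sq_of_unit_equilateral h12 h13 h23 hs.1 hr.1 hP4 hP6
  obtain ⟨hA2, hd2⟩ := angle_and_dist_sq_of_unit_equilateral h23 (dist_comm P2 P1 ▸ h12)
    (dist_comm P3 P1 ▸ h13) ht0 (sub_pos.2 hs.2) hP5 (Y := P4) (by rw [hP4]; module)
  obtain ⟨hA3, hd3⟩ := angle_and_dist_sq_of_unit_equilateral (dist_comm P3 P1 ▸ h13)
    (dist_comm P3 P2 ▸ h23) h12 (sub_pos.2 hr.2) (sub_pos.2 ht1) (X := P6) (Y := P5)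
    (by rw [hP6]; module) (by rw [hP5]; module)
  refine ⟨anglesLe_of_angle_eq_pi_div_three hA1,
    (anglesLe_of_angle_eq_pi_div_three hA2).rotate.rotate,
    (anglesLe_of_angle_eq_pi_div_three hA3).rotate, anglesLe_of_sqSidesAnglesLe ?_⟩
  rw [dist_comm P4 P5, hd2, dist_comm P5 P6, hd3, hd1]
  exact sqSidesAnglesLe_of_rule hr hs ht
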